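/- arXiv:1002.1053 — 2 statements merged into one kernel-verified Lean document; each statement's English description precedes it below -/
import Mathlib

section
/- With the coefficients a^{i,k}_j defined by the recursion a^{i,k}_0 = (2^i/i!) · (2n+2k−2i−1)!/(2n+2k−i−1)! and Σ_{j=0}^{l+1} a^{i,k}_j · c_{i+j, i+l+1, k−i−l−1} = 0 for 0 ≤ l ≤ k−i−1 (where c_{j,k,ℓ} = (1/2^j)(k!/(k−j)!)((2n+2ℓ+k−1)!/(2n+2ℓ+k−j−1)!)), one has the closed form a^{i,k}_j = (−1)^j (2^j/j!) · (2n+2k−2i−j−2)!/(2n+2k−2i−2)! · a^{i,k}_0 for 0 ≤ j ≤ k−i. -/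
/-!
Write `α = 2n+2k−2i−2` and `b_j = (−1)^j (2^j/j!) (α−j)!/α!`. After clearing factorials,
`b_j c_{i+j, i+l+1, k−i−l−1}` is a factor independent of `j` times `(−1)^j C(l+1,j) (α−j)^{(l)}`
(falling factorial), and the alternating sum of these vanishes, being an `(l+1)`-st finite
difference of a polynomial of degree `l`. So `b` solves the recursion with `b_0 = 1`; as the
last coefficient `c_{i+l+1, i+l+1, ·}` of each equation is nonzero, the recursion determines
`a_{l+1}` from `a_0, …, a_l`, whence `a = a_0 b`.
-/

open Finset Polynomial

/-- The coefficient `c_{j,k,ℓ} = (1/2^j) (k!/(k−j)!) ((2n+2ℓ+k−1)!/(2n+2ℓ+k−j−1)!)` from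
`D_s^j (X_s^k m_ℓ) = c_{j,k,ℓ} X_s^{k−j} m_ℓ`. -/
noncomputable def sympC (n j k ℓ : ℕ) : ℝ :=
  (1 / 2 ^ j) * ((k.factorial : ℝ) / ((k - j).factorial : ℝ))
    * (((2 * n + 2 * ℓ + k - 1).factorial : ℝ) / ((2 * n + 2 * ℓ + k - j - 1).factorial : ℝ))

theorem sum_range_neg_one_pow_mul_choose_mul_descFactorial {m p N : ℕ} (hmp : m < p)
    (hpN : p ≤ N) :
    ∑ j ∈ range (p + 1), (-1 : ℤ) ^ j * p.choose j * (N - j).descFactorial m = 0 := by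
  have h := congrFun (fwdDiff_iter_eq_zero_of_degree_lt (P := descPochhammer ℤ m)
    (by rwa [descPochhammer_natDegree])) ((N - p : ℕ) : ℤ)
  rw [fwdDiff_iter_eq_sum_shift, ← sum_range_reflect] at h
  refine (sum_congr rfl fun j hj => ?_).trans h
  have hj : j ≤ p := Nat.lt_succ_iff.mp (mem_range.mp hj)
  rw [Nat.add_sub_cancel, Nat.sub_sub_self hj, Nat.choose_symm hj, nsmul_one, ← Nat.cast_add,
    show N - p + (p - j) = N - j by omega, descPochhammer_eval_eq_descFactorial, smul_eq_mul]

lemma sympC_pos (n j k ℓ : ℕ) : 0 < sympC n j k ℓ := by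
  unfold sympC; positivity

section TriangularRecursion

variable {R : Type*} [CommRing R] [NoZeroDivisors R] {N : ℕ} {c : ℕ → ℕ → R}

theorem eq_zero_of_sum_mul_eq_zero {d : ℕ → R} (hc : ∀ l, l + 1 ≤ N → c l (l + 1) ≠ 0)
    (hd : ∀ l, l + 1 ≤ N → ∑ j ∈ range (l + 2), d j * c l j = 0) (hd0 : d 0 = 0) :
    ∀ j ≤ N, d j = 0 := by
  intro j
  induction j using Nat.strong_induction_on with
  | _ j ih =>
    intro hj
    match j with
    | 0 => exact hd0
    | l + 1 =>
      have hlow : ∑ j ∈ range (l + 1), d j * c l j = 0 :=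
        sum_eq_zero fun j hj => by
          have hj := mem_range.mp hj
          rw [ih j (by omega) (by omega), zero_mul]
      have h := hd l hj
      rw [sum_range_succ, hlow, zero_add] at h
      exact (mul_eq_zero.mp h).resolve_right (hc l hj)

theorem eq_mul_of_sum_mul_eq_zero {a b : ℕ → R} (hc : ∀ l, l + 1 ≤ N → c l (l + 1) ≠ 0)
    (ha : ∀ l, l + 1 ≤ N → ∑ j ∈ range (l + 2), a j * c l j = 0)
    (hb : ∀ l, l + 1 ≤ N → ∑ j ∈ range (l + 2), b j * c l j = 0) (hb0 : b 0 = 1) :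
    ∀ j ≤ N, a j = b j * a 0 := by
  intro j hj
  refine sub_eq_zero.mp (eq_zero_of_sum_mul_eq_zero (d := fun j => a j - b j * a 0) hc
    (fun l hl => ?_) (by simp [hb0]) j hj)
  simp only [sub_mul, sum_sub_distrib, ha l hl, mul_right_comm _ (a 0), ← sum_mul, hb l hl,
    zero_mul, sub_zero]

end TriangularRecursion

noncomputable def fischerCoeff (α j : ℕ) : ℝ :=
  (-1) ^ j * (2 ^ j / j.factorial) * ((α - j).factorial / α.factorial)

lemma fischerCoeff_zero (α : ℕ) : fischerCoeff α 0 = 1 := by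
  simp [fischerCoeff, Nat.factorial_ne_zero]

lemma fischerCoeff_mul_sympC {n i l ℓ j : ℕ} (hn : 0 < n) (hj : j ≤ l + 1) :
    fischerCoeff (2 * n + 2 * ℓ + 2 * l) j * sympC n (i + j) (i + l + 1) ℓ
      = (-1) ^ j * (l + 1).choose j * (2 * n + 2 * ℓ + 2 * l - j).descFactorial l
        * ((i + l + 1).factorial * (2 * n + 2 * ℓ + i + l).factorial
          / (2 ^ i * (2 * n + 2 * ℓ + 2 * l).factorial * (l + 1).factorial)) := by
  set α := 2 * n + 2 * ℓ + 2 * l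
  have hA : ((α - j).factorial : ℝ) = (α - j - l).factorial * (α - j).descFactorial l := by
    exact_mod_cast (Nat.factorial_mul_descFactorial (by omega)).symm
  have hB : ((l + 1).factorial : ℝ) = (l + 1).choose j * j.factorial * (l + 1 - j).factorial := by
    exact_mod_cast (Nat.choose_mul_factorial_mul_factorial hj).symm
  unfold fischerCoeff sympC
  rw [show i + l + 1 - (i + j) = l + 1 - j by omega,
    show 2 * n + 2 * ℓ + (i + l + 1) - 1 = 2 * n + 2 * ℓ + i + l by omega,
    show 2 * n + 2 * ℓ + (i + l + 1) - (i + j) - 1 = α - j - l by omega, hA, hB, pow_add]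
  have := (Nat.choose_pos hj).ne'
  field_simp

theorem sum_fischerCoeff_mul_sympC {n i l ℓ : ℕ} (hn : 0 < n) :
    ∑ j ∈ range (l + 2), fischerCoeff (2 * n + 2 * ℓ + 2 * l) j * sympC n (i + j) (i + l + 1) ℓ
      = 0 := by
  rw [sum_congr rfl fun j hj => fischerCoeff_mul_sympC hn (Nat.lt_succ_iff.mp (mem_range.mp hj)),
    ← sum_mul]
  have h := sum_range_neg_one_pow_mul_choose_mul_descFactorial (m := l) (p := l + 1)
    (N := 2 * n + 2 * ℓ + 2 * l) (by omega) (by omega)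
  rw [← Int.cast_inj (α := ℝ)] at h
  push_cast at h
  rw [h, zero_mul]

theorem fischer_coefficients_closed_form_general (n k i : ℕ) (hn : 1 ≤ n)
    (a : ℕ → ℝ)
    (hrec : ∀ l : ℕ, l + 1 ≤ k - i →
      ∑ j ∈ range (l + 2), a j * sympC n (i + j) (i + l + 1) (k - i - l - 1) = 0) :
    ∀ j ≤ k - i,
      a j = (-1) ^ j * (2 ^ j / (j.factorial : ℝ))
        * (((2 * n + 2 * k - 2 * i - j - 2).factorial : ℝ)
            / ((2 * n + 2 * k - 2 * i - 2).factorial : ℝ)) * a 0 := by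
  have hclosed : ∀ l, l + 1 ≤ k - i →
      ∑ j ∈ range (l + 2), fischerCoeff (2 * n + 2 * k - 2 * i - 2) j
        * sympC n (i + j) (i + l + 1) (k - i - l - 1) = 0 := fun l hl => by
    rw [show 2 * n + 2 * k - 2 * i - 2 = 2 * n + 2 * (k - i - l - 1) + 2 * l by omega]
    exact sum_fischerCoeff_mul_sympC hn
  intro j hj
  rw [eq_mul_of_sum_mul_eq_zero (c := fun l j => sympC n (i + j) (i + l + 1) (k - i - l - 1))
    (fun l _ => (sympC_pos ..).ne') hrec hclosed (fischerCoeff_zero _) j hj, fischerCoeff,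
    Nat.sub_right_comm _ j 2]

/-- the coefficients `a^{i,k}_j` determined by
`a^{i,k}_0 = (2^i/i!) (2n+2k−2i−1)!/(2n+2k−i−1)!` and the recursion
`Σ_{j=0}^{l+1} a^{i,k}_j c_{i+j, i+l+1, k−i−l−1} = 0` (for `0 ≤ l ≤ k−i−1`) are given in
closed form by `a^{i,k}_j = (−1)^j (2^j/j!) (2n+2k−2i−j−2)!/(2n+2k−2i−2)! · a^{i,k}_0`
for `0 ≤ j ≤ k−i`. -/
theorem fischer_coefficients_closed_form (n k i : ℕ) (hn : 1 ≤ n) (hik : i ≤ k)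
    (a : ℕ → ℝ)
    (ha0 : a 0 = (2 ^ i / (i.factorial : ℝ))
      * (((2 * n + 2 * k - 2 * i - 1).factorial : ℝ) / ((2 * n + 2 * k - i - 1).factorial : ℝ)))
    (hrec : ∀ l : ℕ, l + 1 ≤ k - i →
      ∑ j ∈ range (l + 2), a j * sympC n (i + j) (i + l + 1) (k - i - l - 1) = 0) :
    ∀ j ≤ k - i,
      a j = (-1) ^ j * (2 ^ j / (j.factorial : ℝ))
        * (((2 * n + 2 * k - 2 * i - j - 2).factorial : ℝ)
            / ((2 * n + 2 * k - 2 * i - 2).factorial : ℝ)) * a 0 :=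
  fischer_coefficients_closed_form_general n k i hn a hrec
end

section
/- Let X, Y, H satisfy [H,Y] = −Y, [H,X] = X, [Y,X] = H with n ≥ 1, and fix k ≥ 0. Define M^{(p)} as subspaces of a module of vectors of the form X^p m where Y m = 0 and H m = (k−p+n) m, for p = 0,...,k. For 0 ≤ i ≤ k, define the Casimir projection ℙ^k_i = Π_{j=0, j≠i}^{k} (2Γ + j(2n−1+j)) / (j(2n−1+j) − i(2n−1+i)), where Γ = X Y − (1/2)(H−n)(H+n−1). Then ℙ^k_i (X^{k−p} m) = δ_{ip} X^{k−i} m for every monogenic m of degree p ≤ k. -/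
/-!
Γ commutes with `X`, so `X^(k-p) m` lies in the same Γ-eigenspace as the lowest weight
vector `m`, with eigenvalue `-(1/2) p (2n-1+p)`. Hence
`ℙ^k_i` acts on it by the scalar obtained by evaluating the defining polynomial there, and that
polynomial is a Lagrange basis polynomial for the nodes `-(1/2) j (2n-1+j)`, which are distinct
because `j ↦ j (2n-1+j)` is strictly increasing when `n ≥ 1`.
-/

open Finset Polynomial

section Casimir

variable {A : Type*} [Ring A] [Algebra ℝ A]

noncomputable def casimir (n : ℝ) (X Y H : A) : A :=
  X * Y - (1 / 2 : ℝ) • ((H - n • 1) * (H + (n - 1) • 1))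

theorem commute_casimir_left (n : ℝ) {X Y H : A}
    (hHX : H * X - X * H = X) (hYX : Y * X - X * Y = H) : Commute (casimir n X Y H) X := by
  have hH : H * X = X * (H + 1) := by
    rw [mul_add, mul_one, sub_eq_iff_eq_add.mp hHX, add_comm]
  have hY : Y * X = X * Y + H := (sub_eq_iff_eq_add.mp hYX).trans (add_comm _ _)
  have hH' : ∀ z : A, H * (X * z) = X * ((H + 1) * z) := fun z => by
    rw [← mul_assoc, hH, mul_assoc]
  simp only [Commute, SemiconjBy, casimir, sub_mul, mul_sub, smul_mul_assoc, mul_smul_comm,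
    mul_add, add_mul, mul_one, one_mul, mul_assoc, smul_add, smul_sub, hH, hY, hH']
  module

end Casimir

section LowestWeight

variable {M : Type*} [AddCommGroup M] [Module ℝ M] {X Y H : Module.End ℝ M} {m : M}

theorem casimir_apply_of_lowestWeight (n a : ℝ) (hYm : Y m = 0) (hHm : H m = (a + n) • m) :
    casimir n X Y H m = (-(1 / 2) * (a * (2 * n - 1 + a))) • m := by
  simp only [casimir, LinearMap.sub_apply, LinearMap.smul_apply, Module.End.mul_apply,
    LinearMap.add_apply, Module.End.one_apply, hYm, hHm, map_zero, map_smul, map_add, smul_add,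
    smul_sub, smul_smul]
  module

theorem casimir_apply_pow_apply_of_lowestWeight (n a : ℝ) (j : ℕ)
    (hHX : H * X - X * H = X) (hYX : Y * X - X * Y = H)
    (hYm : Y m = 0) (hHm : H m = (a + n) • m) :
    casimir n X Y H ((X ^ j) m) = (-(1 / 2) * (a * (2 * n - 1 + a))) • (X ^ j) m := by
  rw [← Module.End.mul_apply, ((commute_casimir_left n hHX hYX).pow_right j).eq,
    Module.End.mul_apply, casimir_apply_of_lowestWeight n a hYm hHm, map_smul]

end LowestWeight

theorem eval_prod_lagrange {K : Type*} [Field K] {μ : ℕ → K} (hμ : Function.Injective μ)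
    {S : Finset ℕ} {p : ℕ} (hp : p ∈ S) (i : ℕ) {x : K} (hx : 2 * x + μ p = 0) :
    (∏ j ∈ S.erase i, C (μ j - μ i)⁻¹ * (C 2 * X + C (μ j))).eval x = if i = p then 1 else 0 := by
  simp only [eval_prod, eval_mul, eval_add, eval_C, eval_X]
  split_ifs with hip
  · subst hip
    refine prod_eq_one fun j hj => ?_
    have hμj : μ j - μ i ≠ 0 := sub_ne_zero.mpr (hμ.ne (ne_of_mem_erase hj))
    rw [show 2 * x + μ j = μ j - μ i by linear_combination hx, inv_mul_cancel₀ hμj]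
  · refine prod_eq_zero (mem_erase.mpr ⟨Ne.symm hip, hp⟩) ?_
    rw [hx, mul_zero]

theorem strictMono_mul_two_mul_sub_one_add {n : ℕ} (hn : 1 ≤ n) :
    StrictMono fun j : ℕ => (j : ℝ) * (2 * n - 1 + j) := by
  refine strictMono_nat_of_lt_succ fun j => ?_
  have hn' : (1 : ℝ) ≤ n := by exact_mod_cast hn
  push_cast
  nlinarith

theorem casimir_projection_general {M : Type*} [AddCommGroup M] [Module ℝ M]
    (X Y H : Module.End ℝ M) (n k i : ℕ) (hn : 1 ≤ n)
    (hHX : H * X - X * H = X) (hYX : Y * X - X * Y = H) :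
    ∀ p ≤ k, ∀ m : M, Y m = 0 → H m = (((p : ℝ) + n) • m) →
      (Polynomial.aeval
          (X * Y - (1 / 2 : ℝ) • ((H - (n : ℝ) • 1) * (H + ((n : ℝ) - 1) • 1)))
          (∏ j ∈ (range (k + 1)).erase i,
            Polynomial.C (((j : ℝ) * (2 * n - 1 + j) - (i : ℝ) * (2 * n - 1 + i))⁻¹)
              * (Polynomial.C 2 * Polynomial.X
                  + Polynomial.C ((j : ℝ) * (2 * n - 1 + j)))))
        ((X ^ (k - p)) m)
      = if i = p then (X ^ (k - i)) m else 0 := by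
  intro p hpk m hYm hHm
  have hΓ := casimir_apply_pow_apply_of_lowestWeight (n : ℝ) p (k - p) hHX hYX hYm hHm
  refine (Module.End.aeval_apply_of_mem_apply_eq_smul hΓ).trans ?_
  rw [eval_prod_lagrange (strictMono_mul_two_mul_sub_one_add hn).injective
    (mem_range_succ_iff.mpr hpk) i (by ring)]
  split_ifs with hip
  · rw [one_smul, hip]
  · rw [zero_smul]

/-- with `X, Y, H` satisfying `[H,Y] = −Y`, `[H,X] = X`, `[Y,X] = H`, `n ≥ 1`,
`Γ = X Y − ½ (H − n)(H + n − 1)` (the Casimir `Γ_s = X_s D_s − ½ E (2n−1+E)`, `E = H − n`),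
and `0 ≤ i ≤ k`, the Casimir projection
`ℙ^k_i = Π_{j=0, j≠i}^{k} (2Γ + j(2n−1+j)) / (j(2n−1+j) − i(2n−1+i))`
satisfies `ℙ^k_i (X^{k−p} m) = δ_{ip} X^{k−i} m` for every symplectic monogenic `m` of
degree `p ≤ k` (`Y m = 0`, `H m = (p + n) m`). -/
theorem casimir_projection {M : Type*} [AddCommGroup M] [Module ℝ M]
    (X Y H : Module.End ℝ M) (n k i : ℕ) (hn : 1 ≤ n) (hik : i ≤ k)
    (hHY : H * Y - Y * H = -Y) (hHX : H * X - X * H = X) (hYX : Y * X - X * Y = H) :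
    ∀ p ≤ k, ∀ m : M, Y m = 0 → H m = (((p : ℝ) + n) • m) →
      (Polynomial.aeval
          (X * Y - (1 / 2 : ℝ) • ((H - (n : ℝ) • 1) * (H + ((n : ℝ) - 1) • 1)))
          (∏ j ∈ (range (k + 1)).erase i,
            Polynomial.C (((j : ℝ) * (2 * n - 1 + j) - (i : ℝ) * (2 * n - 1 + i))⁻¹)
              * (Polynomial.C 2 * Polynomial.X
                  + Polynomial.C ((j : ℝ) * (2 * n - 1 + j)))))
        ((X ^ (k - p)) m)
      = if i = p then (X ^ (k - i)) m else 0 :=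
  casimir_projection_general X Y H n k i hn hHX hYX
end
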